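/- For every integer r ≥ 5, every maximum matching M of the graph F_{2r} leaves at least two vertices unsaturated, and any two distinct M-unsaturated vertices have a common neighbor. -/

import Mathlib

/-!
A triangle none of whose vertices is matched to a hub `x, y, z` is closed under `M`, so by parity
one of its three vertices is unsaturated. The three hubs are matched into at most three
triangles, so for `r ≥ 5` two triangles contribute distinct unsaturated vertices. The second
claim holds for any two vertices, since `F_{2r}` has diameter at most 2 through its hubs and
triangles.
-/

/-- A matching `M` of `G` is maximum if no matching of `G` has more edges. -/
def SimpleGraph.IsMaximumMatching {α : Type*} (G : SimpleGraph α) (M : G.Subgraph) : Prop :=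
  M.IsMatching ∧ ∀ M' : G.Subgraph, M'.IsMatching → M'.edgeSet.ncard ≤ M.edgeSet.ncard

/-- The (underlying simple) graph `F_n` of the paper (used with `n = r`):
the vertices `x, y, z` are encoded as `Sum.inl 0, Sum.inl 1, Sum.inl 2`, the vertex
`v_{k+1}^{(i)}` is encoded as `Sum.inr (k, i)`; `x` is joined to every `v_1^{(i)}` and
`v_2^{(i)}`, `y` to every `v_1^{(i)}` and `v_3^{(i)}`, `z` to every `v_2^{(i)}` and
`v_3^{(i)}` (i.e. `Sum.inl k` is joined to `Sum.inr (k', i)` iff `k + k' ≠ 2`), and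
for each `i` the vertices `v_1^{(i)}, v_2^{(i)}, v_3^{(i)}` form a triangle. -/
def FGraph (n : ℕ) : SimpleGraph (Fin 3 ⊕ Fin 3 × Fin n) where
  Adj a b :=
    match a, b with
    | .inl k, .inr p => (k : ℕ) + (p.1 : ℕ) ≠ 2
    | .inr p, .inl k => (k : ℕ) + (p.1 : ℕ) ≠ 2
    | .inr p, .inr q => p.2 = q.2 ∧ p.1 ≠ q.1
    | _, _ => False
  symm := by
    constructor
    rintro (k | p) (k' | q) h
    · exact h
    · exact h
    · exact h
    · exact ⟨h.1.symm, h.2.symm⟩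
  loopless := by
    constructor
    rintro (k | p) h
    · exact h
    · exact h.2 rfl

open Finset

namespace SimpleGraph.Subgraph

variable {V : Type*} {G : SimpleGraph V} {M : G.Subgraph}

lemma IsMatching.exists_forall_not_adj_of_odd_card (hM : M.IsMatching) {s : Finset V}
    (hs : Odd #s) (hclosed : ∀ v ∈ s, ∀ w, M.Adj v w → w ∈ s) :
    ∃ v ∈ s, ∀ w, ¬ M.Adj v w := by
  classical
  by_contra! hsat
  have hinduce : (M.induce s).IsMatching := by
    intro v hv
    obtain ⟨w, hvw⟩ := hsat v hv
    exact ⟨w, ⟨hv, hclosed v hv w hvw, hvw⟩, fun u hvu => hM.eq_of_adj_left hvu.2.2 hvw⟩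
  have : Fintype (M.induce s).verts := inferInstanceAs (Fintype (s : Set V))
  have heven := hinduce.even_card
  simp only [induce_verts, Finset.toFinset_coe] at heven
  exact Nat.not_even_iff_odd.2 hs heven

end SimpleGraph.Subgraph

namespace FGraph

variable {r : ℕ}

def triangle (i : Fin r) : Finset (Fin 3 ⊕ Fin 3 × Fin r) :=
  univ.image fun k => .inr (k, i)

lemma mem_triangle {i : Fin r} {v : Fin 3 ⊕ Fin 3 × Fin r} :
    v ∈ triangle i ↔ ∃ k, v = .inr (k, i) := by
  simp [triangle, eq_comm]

lemma card_triangle (i : Fin r) : #(triangle i) = 3 := by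
  rw [triangle, card_image_of_injective _ fun k l h => by simpa using h, card_univ,
    Fintype.card_fin]

lemma eq_of_mem_triangle {i j : Fin r} {v : Fin 3 ⊕ Fin 3 × Fin r}
    (hi : v ∈ triangle i) (hj : v ∈ triangle j) : i = j := by
  obtain ⟨k, rfl⟩ := mem_triangle.1 hi
  obtain ⟨l, hl⟩ := mem_triangle.1 hj
  simp_all

lemma exists_eq_inl_or_mem_triangle_of_adj {i : Fin r} {v w : Fin 3 ⊕ Fin 3 × Fin r}
    (hv : v ∈ triangle i) (hvw : (FGraph r).Adj v w) : (∃ k, w = .inl k) ∨ w ∈ triangle i := by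
  obtain ⟨k, rfl⟩ := mem_triangle.1 hv
  rcases w with l | ⟨l, j⟩
  · exact .inl ⟨l, rfl⟩
  · obtain ⟨rfl, -⟩ : i = j ∧ k ≠ l := hvw
    exact .inr (mem_triangle.2 ⟨l, rfl⟩)

variable {M : (FGraph r).Subgraph}

lemma exists_forall_not_adj_mem_triangle (hM : M.IsMatching) {i : Fin r}
    (hi : ∀ k, ∀ v ∈ triangle i, ¬ M.Adj (.inl k) v) :
    ∃ v ∈ triangle i, ∀ w, ¬ M.Adj v w := by
  refine hM.exists_forall_not_adj_of_odd_card (by rw [card_triangle]; decide) fun v hv w hvw => ?_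
  refine (exists_eq_inl_or_mem_triangle_of_adj hv (M.adj_sub hvw)).resolve_left ?_
  rintro ⟨k, rfl⟩
  exact hi k v hv hvw.symm

lemma card_filter_hub_adj_le
    [DecidablePred fun i : Fin r => ∃ k, ∃ v ∈ triangle i, M.Adj (.inl k) v]
    (hM : M.IsMatching) : #{i | ∃ k, ∃ v ∈ triangle i, M.Adj (.inl k) v} ≤ 3 := by
  refine (card_le_card_of_forall_subsingleton (t := (univ : Finset (Fin 3)))
    (fun i k => ∃ v ∈ triangle i, M.Adj (.inl k) v) ?_ ?_).trans_eq (card_fin 3)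
  · intro i hi
    obtain ⟨k, hk⟩ := (mem_filter.1 hi).2
    exact ⟨k, mem_univ k, hk⟩
  · rintro k - i ⟨-, v, hvi, hkv⟩ j ⟨-, w, hwj, hkw⟩
    exact eq_of_mem_triangle hvi (hM.eq_of_adj_left hkv hkw ▸ hwj)

theorem exists_ne_forall_not_adj (hr : 5 ≤ r) (hM : M.IsMatching) :
    ∃ a b, a ≠ b ∧ (∀ c, ¬ M.Adj a c) ∧ (∀ c, ¬ M.Adj b c) := by
  classical
  set T : Finset (Fin r) := {i | ∃ k, ∃ v ∈ triangle i, M.Adj (.inl k) v}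
  have hT : 1 < #Tᶜ := by
    have hcard : #T ≤ 3 := card_filter_hub_adj_le hM
    rw [card_compl, Fintype.card_fin]
    omega
  have hfree : ∀ i ∈ Tᶜ, ∀ k, ∀ v ∈ triangle i, ¬ M.Adj (.inl k) v := by
    intro i hi k v hv hkv
    exact mem_compl.1 hi (mem_filter.2 ⟨mem_univ i, k, v, hv, hkv⟩)
  obtain ⟨i, hi, j, hj, hij⟩ := one_lt_card.1 hT
  obtain ⟨a, hai, ha⟩ := exists_forall_not_adj_mem_triangle hM (hfree i hi)
  obtain ⟨b, hbj, hb⟩ := exists_forall_not_adj_mem_triangle hM (hfree j hj)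
  refine ⟨a, b, ?_, ha, hb⟩
  rintro rfl
  exact hij (eq_of_mem_triangle hai hbj)

theorem exists_adj_adj (hr : 0 < r) (a b : Fin 3 ⊕ Fin 3 × Fin r) :
    ∃ w, (FGraph r).Adj w a ∧ (FGraph r).Adj w b := by
  have hubs : ∀ k l : Fin 3, ∃ c : Fin 3, (k : ℕ) + c ≠ 2 ∧ (l : ℕ) + c ≠ 2 := by decide
  have hub_tri : ∀ k l : Fin 3, ∃ c : Fin 3, (k : ℕ) + c ≠ 2 ∧ c ≠ l := by decide
  rcases a with k | ⟨k, i⟩ <;> rcases b with l | ⟨l, j⟩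
  · obtain ⟨c, hk, hl⟩ := hubs k l
    exact ⟨.inr (c, ⟨0, hr⟩), hk, hl⟩
  · obtain ⟨c, hk, hl⟩ := hub_tri k l
    exact ⟨.inr (c, j), hk, rfl, hl⟩
  · obtain ⟨c, hl, hk⟩ := hub_tri l k
    exact ⟨.inr (c, i), ⟨rfl, hk⟩, hl⟩
  · obtain ⟨c, hk, hl⟩ := hubs k l
    exact ⟨.inl c, by rwa [add_comm] at hk, by rwa [add_comm] at hl⟩

end FGraph

/-- Every maximum matching `M` of `F_{2r}` leaves at least two vertices unsaturated,
and any two distinct `M`-unsaturated vertices have a common neighbor. -/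
theorem stmt_15 (r : ℕ) (hr : 5 ≤ r) (M : (FGraph r).Subgraph)
    (hM : (FGraph r).IsMaximumMatching M) :
    (∃ a b, a ≠ b ∧ (∀ c, ¬ M.Adj a c) ∧ (∀ c, ¬ M.Adj b c)) ∧
    (∀ a b, a ≠ b → (∀ c, ¬ M.Adj a c) → (∀ c, ¬ M.Adj b c) →
      ∃ w, (FGraph r).Adj w a ∧ (FGraph r).Adj w b) :=
  ⟨FGraph.exists_ne_forall_not_adj hr hM.1, fun a b _ _ _ => FGraph.exists_adj_adj (by omega) a b⟩
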